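/- Let (V,d) be a finite metric space with |V| = n ≥ 1, and let v_0, v_1, ..., v_{n-1} be any enumeration of all points of V (a walk visiting every point). Let L = Σ_{i=1}^{n-1} d(v_{i-1}, v_i) be the length of this walk. Then for every r > 0, there exists a subset S ⊆ V with |S| ≤ 1 + L/r such that every point of V is within distance r of some point of S. -/
import Mathlib


open Finset

/-- The length of the walk `e 0, e 1, …, e (n-1)`: the sum of consecutive distances. -/
noncomputable def walkLen {V : Type*} [MetricSpace V] {n : ℕ} (e : Fin n → V) : ℝ :=
  ∑ i : Fin n, if h : i.val + 1 < n then dist (e i) (e ⟨i.val + 1, h⟩) else 0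

section Aux

variable {V : Type*} [MetricSpace V] {n : ℕ} (e : Fin n → V)

/-- The `i`-th step length of the walk. -/
noncomputable def stepLen (i : ℕ) : ℝ :=
  if h : i + 1 < n then dist (e ⟨i, Nat.lt_of_succ_lt h⟩) (e ⟨i + 1, h⟩) else 0

/-- Prefix sum of step lengths. -/
noncomputable def prefLen (j : ℕ) : ℝ := ∑ i ∈ Finset.range j, stepLen e i

lemma stepLen_nonneg (i : ℕ) : 0 ≤ stepLen e i := by
  unfold stepLen; split <;> positivity

lemma prefLen_mono : Monotone (prefLen e) := by
  intro a b hab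
  exact Finset.sum_le_sum_of_subset_of_nonneg (Finset.range_subset_range.2 hab)
    (fun i _ _ => stepLen_nonneg e i)

lemma walkLen_eq_prefLen : walkLen e = prefLen e n := by
  unfold walkLen prefLen stepLen
  rw [Fin.sum_univ_eq_sum_range (fun i => if h : i + 1 < n then
    dist (e ⟨i, Nat.lt_of_succ_lt h⟩) (e ⟨i + 1, h⟩) else 0)]

lemma dist_le_prefLen : ∀ (b a : ℕ) (ha : a < n) (hb : b < n), a ≤ b →
    dist (e ⟨a, ha⟩) (e ⟨b, hb⟩) ≤ prefLen e b - prefLen e a := by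
  intro b
  induction b with
  | zero =>
    intro a ha hb hab
    interval_cases a
    simp
  | succ c ih =>
    intro a ha hb hab
    rcases eq_or_lt_of_le hab with h | h
    · subst h
      simp
    · have hc : c < n := Nat.lt_of_succ_lt hb
      have hle : a ≤ c := Nat.le_of_lt_succ h
      have h1 := ih a ha hc hle
      have hstep : stepLen e c = dist (e ⟨c, hc⟩) (e ⟨c + 1, hb⟩) := by
        unfold stepLen; rw [dif_pos hb]
      have htri := dist_triangle (e ⟨a, ha⟩) (e ⟨c, hc⟩) (e ⟨c + 1, hb⟩)
      have hpref : prefLen e (c + 1) = prefLen e c + stepLen e c := by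
        unfold prefLen; rw [Finset.sum_range_succ]
      linarith [hstep ▸ htri]

end Aux

/-- Proposition 1(i): for any enumeration of a finite metric space with walk length `L`,
for every `r > 0` there is an `r`-cover of cardinality at most `1 + L/r`. -/
theorem stmt0 {V : Type*} [MetricSpace V] [Fintype V] {n : ℕ} (hn : 1 ≤ n)
    (hcard : Fintype.card V = n) (e : Fin n ≃ V) (L : ℝ) (hL : L = walkLen (⇑e))
    (r : ℝ) (hr : 0 < r) :
    ∃ S : Finset V, (S.card : ℝ) ≤ 1 + L / r ∧ ∀ v : V, ∃ s ∈ S, dist v s ≤ r := by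
  set P := prefLen (⇑e) with hP
  have hLP : L = P n := by rw [hL, walkLen_eq_prefLen]
  have hP0 : P 0 = 0 := by simp [hP, prefLen]
  have hPnonneg : ∀ j, 0 ≤ P j := fun j => hP0 ▸ prefLen_mono (⇑e) (Nat.zero_le j)
  have hLnn : 0 ≤ L := hLP ▸ hPnonneg n
  -- for each k ≤ ⌊L/r⌋₊, there is an index i < n with k*r ≤ P i
  have hex : ∀ k : ℕ, (k : ℝ) * r ≤ L → ∃ i, i < n ∧ (k : ℝ) * r ≤ P i := by
    intro k hk
    refine ⟨n - 1, Nat.sub_lt hn one_pos, ?_⟩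
    have : P (n - 1) = P n := by
      have hsub : n - 1 + 1 = n := Nat.succ_pred_eq_of_pos hn
      have : P n = P (n - 1) + stepLen (⇑e) (n - 1) := by
        conv_lhs => rw [← hsub]
        simp [hP, prefLen, Finset.sum_range_succ]
      have hstep : stepLen (⇑e) (n - 1) = 0 := by
        unfold stepLen
        rw [dif_neg (by omega)]
      linarith
    linarith [hLP ▸ hk, this]
  set m := ⌊L / r⌋₊ with hm
  -- the chosen index for each k
  have hexk : ∀ k ∈ Finset.range (m + 1), ∃ i, i < n ∧ (k : ℝ) * r ≤ P i := by
    intro k hk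
    apply hex
    have hkm : k ≤ m := Nat.lt_succ_iff.mp (Finset.mem_range.mp hk)
    have : (k : ℝ) ≤ L / r := le_trans (Nat.cast_le.mpr hkm) (Nat.floor_le (by positivity))
    calc (k : ℝ) * r ≤ (L / r) * r := by nlinarith
    _ = L := div_mul_cancel₀ L (ne_of_gt hr)
  classical
  -- define choice function via Nat.find
  let idx : ℕ → ℕ := fun k => if h : ∃ i, i < n ∧ (k : ℝ) * r ≤ P i then Nat.find h else 0
  have hidx : ∀ k : ℕ, (∃ i, i < n ∧ (k : ℝ) * r ≤ P i) →
      idx k < n ∧ (k : ℝ) * r ≤ P (idx k) ∧ ∀ j, j < idx k → ¬(j < n ∧ (k : ℝ) * r ≤ P j) := by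
    intro k h
    simp only [idx, dif_pos h]
    exact ⟨(Nat.find_spec h).1, (Nat.find_spec h).2, fun j hj => Nat.find_min h hj⟩
  refine ⟨(Finset.range (m + 1)).image (fun k => if h : idx k < n then e ⟨idx k, h⟩ else e ⟨0, hn⟩), ?_, ?_⟩
  · calc ((Finset.image _ (Finset.range (m + 1))).card : ℝ)
        ≤ ((Finset.range (m + 1)).card : ℝ) := Nat.cast_le.mpr Finset.card_image_le
    _ = (m : ℝ) + 1 := by simp
    _ ≤ 1 + L / r := by
        have := Nat.floor_le (show (0:ℝ) ≤ L / r by positivity)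
        linarith
  · intro v
    obtain ⟨j, rfl⟩ := e.surjective v
    set k := ⌊P j.val / r⌋₊ with hk
    have hPj : 0 ≤ P j.val := hPnonneg _
    have hkr : (k : ℝ) * r ≤ P j.val := by
      have := Nat.floor_le (show (0:ℝ) ≤ P j.val / r by positivity)
      calc (k : ℝ) * r ≤ (P j.val / r) * r := by nlinarith
      _ = P j.val := div_mul_cancel₀ _ (ne_of_gt hr)
    have hkm : k ≤ m := by
      apply Nat.floor_le_floor
      have : P j.val ≤ P n := prefLen_mono (⇑e) (le_of_lt j.isLt)
      have : P j.val ≤ L := hLP ▸ this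
      gcongr
    have hexj : ∃ i, i < n ∧ (k : ℝ) * r ≤ P i := ⟨j.val, j.isLt, hkr⟩
    obtain ⟨hi1, hi2, hi3⟩ := hidx k hexj
    have hij : idx k ≤ j.val := by
      by_contra hcon
      exact hi3 j.val (Nat.lt_of_not_le hcon) ⟨j.isLt, hkr⟩
    refine ⟨_, Finset.mem_image_of_mem _ (Finset.mem_range.mpr (Nat.lt_succ_of_le hkm)), ?_⟩
    rw [dif_pos hi1]
    have hdist := dist_le_prefLen (⇑e) j.val (idx k) hi1 j.isLt hij
    have hPub : P j.val < ((k : ℝ) + 1) * r := by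
      have := Nat.lt_succ_floor (P j.val / r)
      have h2 : P j.val / r < (k : ℝ) + 1 := by
        push_cast at this ⊢
        exact_mod_cast this
      exact (div_lt_iff₀ hr).mp h2
    have hfin : dist (e j) (e ⟨idx k, hi1⟩) ≤ P j.val - P (idx k) := by
      rw [dist_comm]
      exact hdist
    nlinarith
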